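/- arXiv:2011.05395 — 2 statements merged into one kernel-verified Lean document; each statement's English description precedes it below -/
import Mathlib

section
/- The frequency f_{r,n} := (∑_{q=0}^∞ C(r+kq+n,n) · q · ε^{2q}) / (∑_{q=0}^∞ C(r+kq+n,n) · ε^{2q}) admits the closed form f_{r,n} = ( −r·∑_{j=0}^{k-1} ζ_j^{-r} a_j^{-(n+1)} + F·(n+1)·∑_{j=0}^{k-1} ζ_j^{-r+1} a_j^{-(n+2)} ) / ( k·∑_{j=0}^{k-1} ζ_j^{-r} a_j^{-(n+1)} ), where F := ε^{2/k}, ζ_j := exp(2πij/k), a_j := 1 − ζ_j F. -/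
/-!
Write `F ^ k = ε ^ 2`. Up to the common factor `F ^ r`, the denominator of `f_{r,n}` is the part
of degree `≡ r (mod k)` of `∑ m, C(m+n, n) F^m = (1 - F)^-(n+1)`, and `k` times its numerator is
the same part of `∑ m, (m - r) C(m+n, n) F^m = -r (1 - F)^-(n+1) + (n+1) F (1 - F)^-(n+2)`,
because `m - r = k q` there. The roots-of-unity filter extracts the part of degree `≡ r (mod k)`
of a power series `h` as `k⁻¹ ∑ j, ζ_j^(-r) h(ζ_j F)`.
-/

open Filter

noncomputable section

/-- The frequency `f_{r,n} = (∑_q C(r+kq+n,n) q ε^{2q}) / (∑_q C(r+kq+n,n) ε^{2q})`. -/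
def freq (k : ℕ) (ε : ℝ) (r n : ℕ) : ℝ :=
  (∑' q : ℕ, ((r + k * q + n).choose n : ℝ) * (q : ℝ) * ε ^ (2 * q)) /
    (∑' q : ℕ, ((r + k * q + n).choose n : ℝ) * ε ^ (2 * q))

open Finset

section PowerSeries

variable {𝕜 : Type*} [NormedField 𝕜] {x : 𝕜}

theorem hasSum_choose_mul_geometric_zpow (n : ℕ) (hx : ‖x‖ < 1) :
    HasSum (fun m : ℕ => ((m + n).choose n : 𝕜) * x ^ m) ((1 - x) ^ (-((n : ℤ) + 1))) := by
  rw [show -((n : ℤ) + 1) = -((n + 1 : ℕ) : ℤ) by push_cast; ring, zpow_neg, zpow_natCast,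
    ← one_div]
  exact hasSum_choose_mul_geometric_of_norm_lt_one n hx

theorem hasSum_mul_choose_mul_geometric_zpow (n : ℕ) (hx : ‖x‖ < 1) :
    HasSum (fun m : ℕ => (m : 𝕜) * (m + n).choose n * x ^ m)
      ((n + 1) * x * (1 - x) ^ (-((n : ℤ) + 2))) := by
  have hchoose (m : ℕ) :
      ((m + 1 : ℕ) : 𝕜) * (m + 1 + n).choose n = (n + 1) * (m + (n + 1)).choose (n + 1) := by
    have h := Nat.choose_succ_right_eq (m + n + 1) n
    rw [show m + n + 1 - n = m + 1 by omega] at h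
    have h' : (m + 1) * (m + n + 1).choose n = (n + 1) * (m + n + 1).choose (n + 1) := by
      rw [mul_comm, ← h, mul_comm]
    rw [show m + 1 + n = m + n + 1 by omega, show m + (n + 1) = m + n + 1 by omega]
    exact_mod_cast congrArg (Nat.cast : ℕ → 𝕜) h'
  have hshift := (hasSum_choose_mul_geometric_zpow (n + 1) hx).mul_left ((n + 1) * x)
  rw [← hasSum_nat_add_iff' 1,
    show -((n : ℤ) + 2) = -(((n + 1 : ℕ) : ℤ) + 1) by push_cast; ring]
  simp only [sum_range_one, Nat.cast_zero, zero_mul, sub_zero]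
  refine hshift.congr_fun fun m => ?_
  rw [hchoose, pow_succ]
  ring

theorem hasSum_sub_mul_choose_mul_geometric_zpow (n : ℕ) (c : 𝕜) (hx : ‖x‖ < 1) :
    HasSum (fun m : ℕ => ((m : 𝕜) - c) * (m + n).choose n * x ^ m)
      (-c * (1 - x) ^ (-((n : ℤ) + 1)) + (n + 1) * x * (1 - x) ^ (-((n : ℤ) + 2))) := by
  rw [neg_mul, neg_add_eq_sub]
  refine ((hasSum_mul_choose_mul_geometric_zpow n hx).sub
    ((hasSum_choose_mul_geometric_zpow n hx).mul_left c)).congr_fun fun m => ?_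
  ring

end PowerSeries

namespace IsPrimitiveRoot

section Field

variable {K : Type*} [Field K] {k : ℕ} {ω : K}

theorem sum_pow_zpow (hω : IsPrimitiveRoot ω k) (d : ℤ) :
    ∑ j ∈ range k, (ω ^ j) ^ d = if (k : ℤ) ∣ d then (k : K) else 0 := by
  have hcomm (j : ℕ) : (ω ^ j) ^ d = (ω ^ d) ^ j := by
    rw [← zpow_natCast, ← zpow_natCast (ω ^ d), ← zpow_mul, ← zpow_mul, mul_comm]
  simp_rw [hcomm]
  split_ifs with hd
  · simp [(hω.zpow_eq_one_iff_dvd d).mpr hd]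
  · have hωd : (ω ^ d) ^ k = 1 := by
      rw [← zpow_natCast, ← zpow_mul, mul_comm, zpow_mul, zpow_natCast, hω.pow_eq_one,
        one_zpow]
    rw [geom_sum_eq (mt (hω.zpow_eq_one_iff_dvd d).mp hd), hωd, sub_self, zero_div]

variable [TopologicalSpace K] [IsTopologicalRing K] [T2Space K]

theorem sum_zpow_mul_tsum_eq (hω : IsPrimitiveRoot ω k) {r : ℕ} (hr : r < k) (c : ℕ → K)
    (x : K) (hc : ∀ j ∈ range k, Summable fun m => c m * (ω ^ j * x) ^ m) :
    ∑ j ∈ range k, (ω ^ j) ^ (-(r : ℤ)) * ∑' m, c m * (ω ^ j * x) ^ m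
      = k * ∑' q, c (r + k * q) * x ^ (r + k * q) := by
  have hω0 : ω ≠ 0 := hω.ne_zero (by omega)
  set g : ℕ → K := fun m => (if (k : ℤ) ∣ (m : ℤ) - r then (k : K) else 0) * (c m * x ^ m)
  have hsupp : Function.support g ⊆ Set.range (fun q => r + k * q) := by
    intro m hm
    have hdvd : (k : ℤ) ∣ (m : ℤ) - r := by
      by_contra h
      simp [g, h] at hm
    have hmod : m % k = r := by
      rw [← (Nat.modEq_iff_dvd.mpr hdvd : r ≡ m [MOD k]), Nat.mod_eq_of_lt hr]
    exact ⟨m / k, by rw [← hmod]; exact Nat.mod_add_div m k⟩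
  have hinj : Function.Injective (fun q => r + k * q) := fun q q' h =>
    Nat.eq_of_mul_eq_mul_left (by omega) (Nat.add_left_cancel h)
  calc ∑ j ∈ range k, (ω ^ j) ^ (-(r : ℤ)) * ∑' m, c m * (ω ^ j * x) ^ m
      = ∑' m, ∑ j ∈ range k, (ω ^ j) ^ (-(r : ℤ)) * (c m * (ω ^ j * x) ^ m) := by
        simp_rw [← tsum_mul_left]
        exact (Summable.tsum_finsetSum fun j hj => (hc j hj).mul_left _).symm
    _ = ∑' m, g m := by
        refine tsum_congr fun m => ?_
        simp only [g]
        rw [← hω.sum_pow_zpow, sum_mul]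
        refine sum_congr rfl fun j _ => ?_
        rw [mul_pow, sub_eq_add_neg, zpow_add₀ (pow_ne_zero j hω0), zpow_natCast]
        ring
    _ = ∑' q, g (r + k * q) := (hinj.tsum_eq hsupp).symm
    _ = k * ∑' q, c (r + k * q) * x ^ (r + k * q) := by
        rw [← tsum_mul_left]
        refine tsum_congr fun q => ?_
        simp [g]

end Field

section NormedField

variable {𝕜 : Type*} [NormedField 𝕜] {k r : ℕ} {ω x : 𝕜}

theorem norm_pow_mul (hω : IsPrimitiveRoot ω k) (hk : k ≠ 0) (j : ℕ) (x : 𝕜) :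
    ‖ω ^ j * x‖ = ‖x‖ := by
  rw [norm_mul, norm_pow, (hω.isOfFinOrder hk).norm_eq_one, one_pow, one_mul]

theorem sum_zpow_mul_one_sub_mul_zpow (hω : IsPrimitiveRoot ω k) (hr : r < k) (n : ℕ)
    (hx : ‖x‖ < 1) :
    ∑ j ∈ range k, (ω ^ j) ^ (-(r : ℤ)) * (1 - ω ^ j * x) ^ (-((n : ℤ) + 1))
      = k * ∑' q, ((r + k * q + n).choose n : 𝕜) * x ^ (r + k * q) := by
  have hxj (j : ℕ) : ‖ω ^ j * x‖ < 1 := by rwa [hω.norm_pow_mul (by omega)]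
  rw [← hω.sum_zpow_mul_tsum_eq hr _ _
    fun j _ => (hasSum_choose_mul_geometric_zpow n (hxj j)).summable]
  refine sum_congr rfl fun j _ => ?_
  rw [(hasSum_choose_mul_geometric_zpow n (hxj j)).tsum_eq]

theorem neg_mul_sum_zpow_add_mul_sum_zpow (hω : IsPrimitiveRoot ω k) (hr : r < k) (n : ℕ)
    (hx : ‖x‖ < 1) :
    -(r : 𝕜) * ∑ j ∈ range k, (ω ^ j) ^ (-(r : ℤ)) * (1 - ω ^ j * x) ^ (-((n : ℤ) + 1))
        + x * ((n : 𝕜) + 1) *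
          ∑ j ∈ range k, (ω ^ j) ^ (-(r : ℤ) + 1) * (1 - ω ^ j * x) ^ (-((n : ℤ) + 2))
      = k * (k * ∑' q : ℕ, (q : 𝕜) * (r + k * q + n).choose n * x ^ (r + k * q)) := by
  have hxj (j : ℕ) : ‖ω ^ j * x‖ < 1 := by rwa [hω.norm_pow_mul (by omega)]
  have hseries (j : ℕ) := hasSum_sub_mul_choose_mul_geometric_zpow n (r : 𝕜) (hxj j)
  calc _ = ∑ j ∈ range k, (ω ^ j) ^ (-(r : ℤ))
          * ∑' m : ℕ, ((m : 𝕜) - r) * (m + n).choose n * (ω ^ j * x) ^ m := by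
        rw [mul_sum, mul_sum, ← sum_add_distrib]
        refine sum_congr rfl fun j _ => ?_
        rw [(hseries j).tsum_eq, zpow_add₀ (pow_ne_zero j (hω.ne_zero (by omega))), zpow_one]
        ring
    _ = _ := by
        rw [hω.sum_zpow_mul_tsum_eq hr _ x fun j _ => (hseries j).summable]
        congr 1
        rw [← tsum_mul_left]
        refine tsum_congr fun q => ?_
        push_cast
        ring

end NormedField

end IsPrimitiveRoot

theorem freq_eq_tsum_div_tsum {k : ℕ} {ε x : ℝ} (hx : x ≠ 0) (hxk : x ^ k = ε ^ 2)
    (r n : ℕ) :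
    freq k ε r n = (∑' q : ℕ, (q : ℝ) * (r + k * q + n).choose n * x ^ (r + k * q))
      / ∑' q : ℕ, ((r + k * q + n).choose n : ℝ) * x ^ (r + k * q) := by
  have hpow (q : ℕ) : x ^ (r + k * q) = x ^ r * ε ^ (2 * q) := by
    rw [pow_add, pow_mul, hxk, ← pow_mul]
  have hnum : ∑' q : ℕ, (q : ℝ) * (r + k * q + n).choose n * x ^ (r + k * q)
      = x ^ r * ∑' q : ℕ, ((r + k * q + n).choose n : ℝ) * q * ε ^ (2 * q) := by
    rw [← tsum_mul_left]
    exact tsum_congr fun q => by rw [hpow]; ring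
  have hden : ∑' q : ℕ, ((r + k * q + n).choose n : ℝ) * x ^ (r + k * q)
      = x ^ r * ∑' q : ℕ, ((r + k * q + n).choose n : ℝ) * ε ^ (2 * q) := by
    rw [← tsum_mul_left]
    exact tsum_congr fun q => by rw [hpow]; ring
  rw [freq, hnum, hden, mul_div_mul_left _ _ (pow_ne_zero r hx)]

/-- the frequency `f_{r,n}` admits the closed form
`f_{r,n} = (−r ∑_j ζ_j^{-r} a_j^{-(n+1)} + F(n+1) ∑_j ζ_j^{-r+1} a_j^{-(n+2)})
  / (k ∑_j ζ_j^{-r} a_j^{-(n+1)})` with `F = ε^{2/k}`, `ζ_j = e^{2πij/k}`, `a_j = 1 − ζ_j F`. -/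
theorem statement8 (k : ℕ) (hk : 1 ≤ k) (ε : ℝ) (hε0 : 0 < ε) (hε1 : ε < 1)
    (r n : ℕ) (hr : r ≤ k - 1)
    (F : ℝ) (hF : F = ε ^ ((2 : ℝ) / (k : ℝ)))
    (ζ a : ℕ → ℂ)
    (hζ : ∀ j, ζ j = Complex.exp (2 * Real.pi * Complex.I * j / k))
    (ha : ∀ j, a j = 1 - ζ j * (F : ℂ)) :
    (freq k ε r n : ℂ)
      = (-(r : ℂ) * ∑ j ∈ Finset.range k, ζ j ^ (-(r : ℤ)) * a j ^ (-((n : ℤ) + 1))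
          + (F : ℂ) * ((n : ℂ) + 1) *
            ∑ j ∈ Finset.range k, ζ j ^ (-(r : ℤ) + 1) * a j ^ (-((n : ℤ) + 2))) /
        ((k : ℂ) * ∑ j ∈ Finset.range k, ζ j ^ (-(r : ℤ)) * a j ^ (-((n : ℤ) + 1))) := by
  have hk0 : k ≠ 0 := by omega
  have hω := Complex.isPrimitiveRoot_exp k hk0
  have hζω (j : ℕ) : ζ j = Complex.exp (2 * Real.pi * Complex.I / k) ^ j := by
    rw [hζ, ← Complex.exp_nat_mul]
    ring_nf
  have hF0 : 0 < F := hF ▸ by positivity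
  have hFk : F ^ k = ε ^ 2 := by
    rw [hF, ← Real.rpow_natCast, ← Real.rpow_mul hε0.le, div_mul_cancel₀ _ (by positivity)]
    norm_num
  have hF1 : ‖(F : ℂ)‖ < 1 := by
    rw [Complex.norm_real, Real.norm_of_nonneg hF0.le, hF]
    exact Real.rpow_lt_one hε0.le hε1 (by positivity)
  have hkC : (k : ℂ) ≠ 0 := Nat.cast_ne_zero.mpr hk0
  simp only [ha, hζω]
  rw [hω.neg_mul_sum_zpow_add_mul_sum_zpow (by omega) n hF1,
    hω.sum_zpow_mul_one_sub_mul_zpow (by omega) n hF1, freq_eq_tsum_div_tsum hF0.ne' hFk]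
  push_cast
  rw [mul_div_mul_left _ _ hkC, mul_div_mul_left _ _ hkC]

end
end

section
/- With f_{r,n} := (∑_{q} C(r+kq+n,n) q ε^{2q}) / (∑_{q} C(r+kq+n,n) ε^{2q}) and F := ε^{2/k}, the asymptotic formula holds: f_{r,n} − ( F/(k(1−F)) · n + F/(k(1−F)) − r/k ) → 0 as n → ∞. -/
/-!
Put `S n = ∑_q C(r+kq+n, n) (F^k)^q`, the denominator of `freq k ε r n`. The identity
`(n+1) C(m+1, n+1) = (m+1) C(m, n)` turns the numerator into `((n+1) S (n+1) - (r+n+1) S n) / k`,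
so the claim becomes `(n+1) (S (n+1) / S n - 1/(1-F)) → 0`.

Filtering `∑_m C(m+n, n) z^m = (1-z)^{-(n+1)}` with a primitive `k`-th root of unity `ζ` gives
`F^r S n = (1/k) ∑_{j<k} ζ^{-jr} (1 - ζ^j F)^{-(n+1)}`. Hence `(1-F)^{n+1} S n` is a constant plus
a combination of powers `θ_j^n` of `θ_j = (1-F)/(1-ζ^j F)`, `0 < j < k`, which lie in the open unit
disk. These terms decay geometrically, fast enough to beat the factor `n+1`.
-/

open Filter

noncomputable section

open Topology Finset

theorem Complex.one_sub_lt_norm_one_sub_mul {z : ℂ} (hz : ‖z‖ = 1) (hz1 : z ≠ 1) {F : ℝ}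
    (hF : 0 < F) : 1 - F < ‖1 - z * F‖ := by
  have hre : z.re < 1 := by
    refine ((Complex.re_le_norm z).trans_eq hz).lt_of_ne fun h => hz1 ?_
    have him : z.im = 0 := Complex.abs_re_eq_norm.mp (by rw [h, hz, abs_one])
    exact Complex.ext (by simpa using h) (by simpa using him)
  calc 1 - F < 1 - z.re * F := by nlinarith
    _ = (1 - z * F).re := by simp
    _ ≤ ‖1 - z * F‖ := Complex.re_le_norm _

theorem IsPrimitiveRoot.sum_pow_mul_eq_ite {R : Type*} [CommRing R] [IsDomain R] {ζ : R} {k : ℕ}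
    (hζ : IsPrimitiveRoot ζ k) (m : ℕ) :
    ∑ j ∈ range k, ζ ^ (j * m) = if k ∣ m then (k : R) else 0 := by
  simp_rw [mul_comm _ m, pow_mul]
  split_ifs with h
  · simp [(hζ.pow_eq_one_iff_dvd m).mpr h]
  · have hk : (ζ ^ m) ^ k = 1 := by rw [← pow_mul, mul_comm, pow_mul, hζ.pow_eq_one, one_pow]
    have hgeom := geom_sum_mul (ζ ^ m) k
    rw [hk, sub_self] at hgeom
    exact (mul_eq_zero.mp hgeom).resolve_right
      (sub_ne_zero.mpr (mt (hζ.pow_eq_one_iff_dvd m).mp h))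

theorem Nat.dvd_add_sub_iff_mem_range {k r m : ℕ} (hrk : r < k) :
    k ∣ m + (k - r) ↔ m ∈ Set.range (fun q => r + k * q) := by
  simp only [Set.mem_range]
  constructor
  · rintro ⟨_ | t, ht⟩
    · omega
    · exact ⟨t, by rw [mul_add, mul_one] at ht; omega⟩
  · rintro ⟨q, rfl⟩
    exact ⟨q + 1, by rw [mul_add, mul_one]; omega⟩

/-- The weight `ζ ^ (j * (k - r))` is `ζ ^ (-j * r)` written with a natural exponent. -/
theorem IsPrimitiveRoot.hasSum_apply_add_mul {R : Type*} [Field R] [TopologicalSpace R]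
    [IsTopologicalRing R] {ζ : R} {k r : ℕ} (hζ : IsPrimitiveRoot ζ k) (hrk : r < k)
    {f g : ℕ → R} (hg : ∀ j, HasSum (fun m => f m * ζ ^ (j * m)) (g j)) :
    HasSum (fun q => f (r + k * q)) ((∑ j ∈ range k, ζ ^ (j * (k - r)) * g j) / k) := by
  have : NeZero k := ⟨by omega⟩
  have hk : (k : R) ≠ 0 := hζ.neZero'.out
  have hinj : Function.Injective (fun q => r + k * q) := fun a b h =>
    Nat.eq_of_mul_eq_mul_left (by omega) (Nat.add_left_cancel h)
  have hfilter : ∀ m, (∑ j ∈ range k, ζ ^ (j * (k - r)) * (f m * ζ ^ (j * m))) / k =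
      Set.indicator (Set.range (fun q => r + k * q)) f m := by
    intro m
    have hsum : ∑ j ∈ range k, ζ ^ (j * (k - r)) * (f m * ζ ^ (j * m)) =
        f m * ∑ j ∈ range k, ζ ^ (j * (m + (k - r))) := by
      rw [mul_sum]
      exact sum_congr rfl fun j _ => by rw [mul_add, pow_add]; ring
    classical
    rw [hsum, hζ.sum_pow_mul_eq_ite, Set.indicator_apply, ← Nat.dvd_add_sub_iff_mem_range hrk]
    split_ifs <;> simp [hk]
  have hall := (hasSum_sum (s := range k) fun j _ =>
    (hg j).mul_left (ζ ^ (j * (k - r)))).div_const (k : R)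
  simp_rw [hfilter] at hall
  rw [← hinj.hasSum_iff fun m hm => Set.indicator_of_notMem hm f] at hall
  exact hall.congr_fun fun q =>
    (Set.indicator_of_mem (Set.mem_range_self (f := fun q => r + k * q) q) f).symm

theorem IsPrimitiveRoot.hasSum_choose_mul_pow_add_mul {𝕜 : Type*} [NormedField 𝕜] {ζ : 𝕜}
    {k r : ℕ} (hζ : IsPrimitiveRoot ζ k) (hrk : r < k) {z : 𝕜} (hz : ‖z‖ < 1) (n : ℕ) :
    HasSum (fun q => ((r + k * q + n).choose n : 𝕜) * z ^ (r + k * q))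
      ((∑ j ∈ range k, ζ ^ (j * (k - r)) / (1 - ζ ^ j * z) ^ (n + 1)) / k) := by
  have hζ1 : ‖ζ‖ = 1 := by
    simpa [norm_pow] using (pow_eq_one_iff_of_nonneg (norm_nonneg ζ) (by omega : k ≠ 0)).mp
      (by rw [← norm_pow, hζ.pow_eq_one, norm_one])
  simp_rw [div_eq_mul_one_div (ζ ^ _)]
  refine hζ.hasSum_apply_add_mul (f := fun m => ((m + n).choose n : 𝕜) * z ^ m) hrk fun j => ?_
  have hlt : ‖ζ ^ j * z‖ < 1 := by rwa [norm_mul, norm_pow, hζ1, one_pow, one_mul]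
  convert hasSum_choose_mul_geometric_of_norm_lt_one n hlt using 2 with m
  rw [mul_pow, ← pow_mul, mul_comm j m]; ring

theorem tendsto_of_ofReal_eq_add_sum_mul_pow {ι : Type*} {s : Finset ι} {a θ : ι → ℂ}
    (hθ : ∀ i ∈ s, ‖θ i‖ < 1) {c : ℕ → ℝ} {L : ℝ}
    (hc : ∀ n, (c n : ℂ) = L + ∑ i ∈ s, a i * θ i ^ n) :
    Tendsto c atTop (𝓝 L) ∧
      Tendsto (fun n : ℕ => ((n : ℝ) + 1) * (c (n + 1) - c n)) atTop (𝓝 0) := by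
  have hpow : ∀ i ∈ s, Tendsto (fun n : ℕ => θ i ^ n) atTop (𝓝 0) := fun i hi =>
    tendsto_pow_atTop_nhds_zero_of_norm_lt_one (hθ i hi)
  have hmul_pow : ∀ i ∈ s, Tendsto (fun n : ℕ => (n : ℂ) * θ i ^ n) atTop (𝓝 0) := fun i hi => by
    simpa using (summable_pow_mul_geometric_of_norm_lt_one 1 (hθ i hi)).tendsto_atTop_zero
  constructor
  · rw [← tendsto_ofReal_iff]
    simp_rw [hc]
    simpa using tendsto_const_nhds.add
      (tendsto_finsetSum s fun i hi => (hpow i hi).const_mul (a i))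
  · rw [← tendsto_ofReal_iff]
    have hdiff : ∀ n : ℕ, ((((n : ℝ) + 1) * (c (n + 1) - c n) : ℝ) : ℂ) =
        ∑ i ∈ s, a i * (θ i - 1) * ((n : ℂ) * θ i ^ n + θ i ^ n) := by
      intro n
      push_cast
      rw [hc, hc, add_sub_add_left_eq_sub, ← sum_sub_distrib, mul_sum]
      exact sum_congr rfl fun i _ => by ring
    simp_rw [hdiff]
    simpa using tendsto_finsetSum s fun i hi =>
      ((hmul_pow i hi).add (hpow i hi)).const_mul (a i * (θ i - 1))

theorem tendsto_mul_div_sub_inv {S c : ℕ → ℝ} {ρ L : ℝ} (hρ : ρ ≠ 0) (hL : L ≠ 0)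
    (hSc : ∀ n, ρ ^ (n + 1) * S n = c n) (hc : Tendsto c atTop (𝓝 L))
    (hdiff : Tendsto (fun n : ℕ => ((n : ℝ) + 1) * (c (n + 1) - c n)) atTop (𝓝 0)) :
    Tendsto (fun n : ℕ => ((n : ℝ) + 1) * (S (n + 1) / S n - ρ⁻¹)) atTop (𝓝 0) := by
  have hlim : Tendsto (fun n : ℕ => ((n : ℝ) + 1) * (c (n + 1) - c n) * (ρ * c n)⁻¹)
      atTop (𝓝 0) := by
    simpa using hdiff.mul ((hc.const_mul ρ).inv₀ (mul_ne_zero hρ hL))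
  refine hlim.congr' ?_
  filter_upwards [hc.eventually_ne hL] with n hn
  have hSn : S n ≠ 0 := fun h => hn (by rw [← hSc, h, mul_zero])
  rw [← hSc, ← hSc]
  field_simp
  ring

theorem hasSum_choose_mul_nat_mul_pow {k r : ℕ} (hk : k ≠ 0) {x : ℝ} {S : ℕ → ℝ}
    (hS : ∀ n, HasSum (fun q => ((r + k * q + n).choose n : ℝ) * x ^ q) (S n)) (n : ℕ) :
    HasSum (fun q => ((r + k * q + n).choose n : ℝ) * q * x ^ q)
      ((((n : ℝ) + 1) * S (n + 1) - (r + n + 1) * S n) / k) := by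
  refine (((hS (n + 1)).mul_left ((n : ℝ) + 1)).sub ((hS n).mul_left ((r : ℝ) + n + 1))).div_const
    (k : ℝ) |>.congr_fun fun q => ?_
  have hchoose : ((r + k * q + n + 1 : ℕ) : ℝ) * ((r + k * q + n).choose n : ℝ) =
      ((r + k * q + (n + 1)).choose (n + 1) : ℝ) * (n + 1) := by
    exact_mod_cast Nat.add_one_mul_choose_eq (r + k * q + n) n
  push_cast at hchoose
  field_simp
  linear_combination x ^ q * hchoose

theorem summable_choose_mul_pow_add_mul {k : ℕ} (hk : k ≠ 0) (r n : ℕ) {F : ℝ} (hF0 : 0 < F)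
    (hF1 : F < 1) : Summable (fun q => ((r + k * q + n).choose n : ℝ) * (F ^ k) ^ q) := by
  have hgeom := summable_choose_mul_geometric_of_norm_lt_one n
    (by rwa [Real.norm_of_nonneg hF0.le] : ‖F‖ < 1)
  refine ((hgeom.comp_injective ((add_right_injective r).comp (mul_right_injective₀ hk))).mul_left
    (F ^ r)⁻¹).congr fun q => ?_
  simp only [Function.comp_apply, pow_add, pow_mul]
  field_simp

theorem IsPrimitiveRoot.ofReal_one_sub_pow_mul_eq_sum {ζ : ℂ} {k r : ℕ}
    (hζ : IsPrimitiveRoot ζ k) (hrk : r < k) {F : ℝ} (hF0 : 0 < F) (hF1 : F < 1) {S : ℕ → ℝ}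
    (hS : ∀ n, HasSum (fun q => ((r + k * q + n).choose n : ℝ) * (F ^ k) ^ q) (S n)) (n : ℕ) :
    (((1 - F) ^ (n + 1) * S n : ℝ) : ℂ) =
      (∑ j ∈ range k, ζ ^ (j * (k - r)) * ((1 - F) / (1 - ζ ^ j * F)) ^ (n + 1)) /
        (k * F ^ r) := by
  have hreal : HasSum (fun q => ((r + k * q + n).choose n : ℂ) * (F : ℂ) ^ (r + k * q))
      ((F : ℂ) ^ r * S n) := by
    refine ((Complex.hasSum_ofReal.mpr (hS n)).mul_left ((F : ℂ) ^ r)).congr_fun fun q => ?_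
    push_cast
    ring
  have hval := hreal.unique (hζ.hasSum_choose_mul_pow_add_mul hrk
    (by rwa [Complex.norm_real, Real.norm_of_nonneg hF0.le]) n)
  have hk : (k : ℂ) ≠ 0 := Nat.cast_ne_zero.mpr (by omega)
  have hF : (F : ℂ) ^ r ≠ 0 := pow_ne_zero r (Complex.ofReal_ne_zero.mpr hF0.ne')
  rw [eq_div_iff (mul_ne_zero hk hF)]
  calc (((1 - F) ^ (n + 1) * S n : ℝ) : ℂ) * (k * F ^ r)
      = (1 - F) ^ (n + 1) * ((∑ j ∈ range k,
          ζ ^ (j * (k - r)) / (1 - ζ ^ j * F) ^ (n + 1)) / k) * k := by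
        rw [← hval]
        push_cast
        ring
    _ = _ := by
        rw [mul_assoc, div_mul_cancel₀ _ hk, mul_sum]
        exact sum_congr rfl fun j _ => by rw [div_pow]; ring

theorem tendsto_mul_div_sub_of_hasSum_choose {k r : ℕ} (hrk : r < k) {F : ℝ} (hF0 : 0 < F)
    (hF1 : F < 1) {S : ℕ → ℝ}
    (hS : ∀ n, HasSum (fun q => ((r + k * q + n).choose n : ℝ) * (F ^ k) ^ q) (S n)) :
    Tendsto (fun n : ℕ => ((n : ℝ) + 1) * (S (n + 1) / S n - (1 - F)⁻¹)) atTop (𝓝 0) := by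
  obtain ⟨k, rfl⟩ : ∃ k', k = k' + 1 := ⟨k - 1, by omega⟩
  set ζ : ℂ := Complex.exp (2 * Real.pi * Complex.I / (k + 1 : ℕ))
  have hζ : IsPrimitiveRoot ζ (k + 1) := Complex.isPrimitiveRoot_exp _ k.succ_ne_zero
  set θ : ℕ → ℂ := fun j => (1 - F) / (1 - ζ ^ j * F)
  have hθ0 : θ 0 = 1 := by
    simp only [θ, pow_zero, one_mul]
    exact div_self (sub_ne_zero.mpr (by exact_mod_cast hF1.ne'))
  have hθ : ∀ j ∈ range k, ‖θ (j + 1)‖ < 1 := fun j hj => by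
    have hlt := Complex.one_sub_lt_norm_one_sub_mul
      (by rw [norm_pow, hζ.norm'_eq_one k.succ_ne_zero, one_pow])
      (hζ.pow_ne_one_of_pos_of_lt j.succ_ne_zero (by simpa using hj)) hF0
    rw [norm_div, div_lt_one ((sub_pos.mpr hF1).trans hlt), ← Complex.ofReal_one,
      ← Complex.ofReal_sub, Complex.norm_real, Real.norm_of_nonneg (sub_pos.mpr hF1).le]
    exact hlt
  set L : ℝ := ((k + 1 : ℕ) * F ^ r)⁻¹
  have hc : ∀ n, (((1 - F) ^ (n + 1) * S n : ℝ) : ℂ) =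
      L + ∑ j ∈ range k, ζ ^ ((j + 1) * (k + 1 - r)) * θ (j + 1) * L * θ (j + 1) ^ n := by
    intro n
    rw [hζ.ofReal_one_sub_pow_mul_eq_sum hrk hF0 hF1 hS, sum_range_succ',
      show ((1 : ℂ) - F) / (1 - ζ ^ 0 * F) = 1 from hθ0]
    simp only [zero_mul, pow_zero, one_pow, mul_one, L]
    rw [add_div, sum_div, add_comm]
    push_cast
    exact congrArg₂ _ (one_div _) (sum_congr rfl fun j _ => by ring)
  obtain ⟨hlim, hdiff⟩ := tendsto_of_ofReal_eq_add_sum_mul_pow hθ hc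
  exact tendsto_mul_div_sub_inv (by linarith) (by positivity) (fun n => rfl) hlim hdiff

theorem freq_sub_eq {k r : ℕ} (hk : k ≠ 0) {ε : ℝ} {S : ℕ → ℝ}
    (hS : ∀ n, HasSum (fun q => ((r + k * q + n).choose n : ℝ) * (ε ^ 2) ^ q) (S n))
    {F : ℝ} (hF : F ≠ 1) (n : ℕ) :
    freq k ε r n - (F / (k * (1 - F)) * n + F / (k * (1 - F)) - r / k) =
      ((n : ℝ) + 1) * (S (n + 1) / S n - (1 - F)⁻¹) / k := by
  have hSn : S n ≠ 0 := by
    have hfirst : (0 : ℝ) < (r + k * 0 + n).choose n * (ε ^ 2) ^ 0 := by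
      simpa using Nat.choose_pos (by omega : n ≤ r + n)
    exact (hfirst.trans_le (le_hasSum (hS n) 0 fun _ _ => by positivity)).ne'
  have hF' : 1 - F ≠ 0 := sub_ne_zero.mpr hF.symm
  simp only [freq, pow_mul]
  rw [(hasSum_choose_mul_nat_mul_pow hk hS n).tsum_eq, (hS n).tsum_eq]
  field_simp
  ring

/-- `f_{r,n} − (F/(k(1−F))·n + F/(k(1−F)) − r/k) → 0` as `n → ∞`,
where `F = ε^{2/k}`. -/
theorem statement9 (k : ℕ) (hk : 1 ≤ k) (ε : ℝ) (hε0 : 0 < ε) (hε1 : ε < 1)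
    (r : ℕ) (hr : r ≤ k - 1)
    (F : ℝ) (hF : F = ε ^ ((2 : ℝ) / (k : ℝ))) :
    Tendsto (fun n : ℕ =>
        freq k ε r n - (F / (k * (1 - F)) * n + F / (k * (1 - F)) - r / k))
      atTop (nhds 0) := by
  have hrk : r < k := by omega
  have hF0 : 0 < F := hF ▸ Real.rpow_pos_of_pos hε0 _
  have hF1 : F < 1 := hF ▸ Real.rpow_lt_one hε0.le hε1 (by positivity)
  have hFk : F ^ k = ε ^ 2 := by
    rw [hF, ← Real.rpow_natCast, ← Real.rpow_mul hε0.le, div_mul_cancel₀ _ (by positivity)]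
    norm_cast
  set S : ℕ → ℝ := fun n => ∑' q : ℕ, ((r + k * q + n).choose n : ℝ) * (F ^ k) ^ q
  have hS : ∀ n, HasSum (fun q => ((r + k * q + n).choose n : ℝ) * (F ^ k) ^ q) (S n) :=
    fun n => (summable_choose_mul_pow_add_mul (by omega) r n hF0 hF1).hasSum
  have hSε : ∀ n, HasSum (fun q => ((r + k * q + n).choose n : ℝ) * (ε ^ 2) ^ q) (S n) := by
    simpa only [hFk] using hS
  simpa [freq_sub_eq (by omega) hSε hF1.ne] using
    (tendsto_mul_div_sub_of_hasSum_choose hrk hF0 hF1 hS).div_const (k : ℝ)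

end
end
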